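/- Let A be an m×m real symmetrizable matrix with m ≥ 2, let k ∈ {1,...,m}, and let B be the (m−1)×(m−1) principal submatrix of A obtained by deleting row k and column k of A. Then A and B have all eigenvalues real, and if λ_1 ≤ λ_2 ≤ ... ≤ λ_m are the eigenvalues of A and μ_1 ≤ μ_2 ≤ ... ≤ μ_{m−1} are the eigenvalues of B (each listed with multiplicity), then λ_p ≤ μ_p ≤ λ_{p+1} for every p with 1 ≤ p ≤ m−1. -/

import Mathlib

/-!
With `d` the positive weights symmetrizing `A` and `e = √d`, the matrix
`S = diag e * A * diag e⁻¹` is symmetric, and deleting row and column `k` of `S` gives the same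
conjugation of `B` by the remaining entries of `e`. Similar matrices share their characteristic
polynomial, so everything reduces to a real symmetric `S` and its principal submatrix, whose
eigenvalues are real.

Interlacing is then the Courant–Fischer dimension count: in `ℝ^(n+1)` the span of the
eigenvectors of `S` for `lam 0, …, lam (p+1)` and the zero-extended span of the eigenvectors of
the submatrix for `mu p, …, mu (n-1)` have dimensions adding up to `n + 2`, so they share a
nonzero vector `x`, and `mu p * ‖x‖² ≤ ⟪x, S x⟫ ≤ lam (p+1) * ‖x‖²`. Exchanging the roles of the
two ends of the spectra gives `lam p ≤ mu p`.
-/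

open Polynomial

/-- A real square matrix is *symmetrizable* if some diagonal matrix with
strictly positive entries makes it symmetric by left multiplication. -/
def Matrix.Symmetrizable {n : Type*} [Fintype n] [DecidableEq n]
    (A : Matrix n n ℝ) : Prop :=
  ∃ d : n → ℝ, (∀ i, 0 < d i) ∧ (Matrix.diagonal d * A).IsSymm

open Module Submodule
open scoped RealInnerProductSpace Matrix

theorem Submodule.exists_mem_inf_ne_zero_of_finrank_lt {K V : Type*} [DivisionRing K]
    [AddCommGroup V] [Module K V] [FiniteDimensional K V] {U W : Submodule K V}
    (h : finrank K V < finrank K U + finrank K W) : ∃ x ∈ U, x ∈ W ∧ x ≠ 0 := by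
  by_contra! hUW
  exact h.not_ge (finrank_add_finrank_le_of_disjoint (disjoint_def.mpr hUW))

namespace OrthonormalBasis

variable {ι E : Type*} [Fintype ι] [NormedAddCommGroup E] [InnerProductSpace ℝ E]
  (b : OrthonormalBasis ι ℝ E)

theorem finrank_span_image (s : Finset ι) : finrank ℝ (span ℝ (b '' s)) = s.card := by
  rw [Set.image_eq_range]
  exact (finrank_span_eq_card (b.orthonormal.linearIndependent.comp _ Subtype.val_injective)).trans
    (Fintype.card_coe s)

theorem norm_sq_eq_sum_repr_sq (x : E) : ‖x‖ ^ 2 = ∑ i, b.repr x i ^ 2 := by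
  rw [← b.repr.norm_map x, EuclideanSpace.norm_sq_eq]
  simp only [Real.norm_eq_abs, sq_abs]

theorem repr_eq_zero_of_mem_span_image {s : Set ι} {x : E} (hx : x ∈ span ℝ (b '' s)) {i : ι}
    (hi : i ∉ s) : b.repr x i = 0 := by
  rw [← b.coe_toBasis, Basis.mem_span_image] at hx
  rw [← b.coe_toBasis_repr_apply]
  exact Finsupp.notMem_support_iff.mp fun h => hi (hx h)

variable {b} {T : E →ₗ[ℝ] E} {lam : ι → ℝ}

theorem inner_map_self_eq_sum (hT : ∀ i, T (b i) = lam i • b i) (x : E) :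
    ⟪x, T x⟫ = ∑ i, lam i * b.repr x i ^ 2 := by
  have hTx : T x = ∑ i, (b.repr x i * lam i) • b i := by
    conv_lhs => rw [← b.sum_repr x]
    simp only [map_sum, map_smul, hT, smul_smul]
  rw [hTx, inner_sum]
  refine Finset.sum_congr rfl fun i _ => ?_
  rw [real_inner_smul_right, real_inner_comm, ← b.repr_apply_apply]
  ring

theorem inner_map_self_le_of_mem_span_image (hT : ∀ i, T (b i) = lam i • b i) {s : Set ι}
    {c : ℝ} (hs : ∀ i ∈ s, lam i ≤ c) {x : E} (hx : x ∈ span ℝ (b '' s)) :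
    ⟪x, T x⟫ ≤ c * ‖x‖ ^ 2 := by
  rw [inner_map_self_eq_sum hT, b.norm_sq_eq_sum_repr_sq, Finset.mul_sum]
  refine Finset.sum_le_sum fun i _ => ?_
  by_cases hi : i ∈ s
  · exact mul_le_mul_of_nonneg_right (hs i hi) (sq_nonneg _)
  · simp [b.repr_eq_zero_of_mem_span_image hx hi]

theorem le_inner_map_self_of_mem_span_image (hT : ∀ i, T (b i) = lam i • b i) {s : Set ι}
    {c : ℝ} (hs : ∀ i ∈ s, c ≤ lam i) {x : E} (hx : x ∈ span ℝ (b '' s)) :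
    c * ‖x‖ ^ 2 ≤ ⟪x, T x⟫ := by
  rw [inner_map_self_eq_sum hT, b.norm_sq_eq_sum_repr_sq, Finset.mul_sum]
  refine Finset.sum_le_sum fun i _ => ?_
  by_cases hi : i ∈ s
  · exact mul_le_mul_of_nonneg_right (hs i hi) (sq_nonneg _)
  · simp [b.repr_eq_zero_of_mem_span_image hx hi]

end OrthonormalBasis

section Interlacing

variable {E F : Type*} [NormedAddCommGroup E] [InnerProductSpace ℝ E] [NormedAddCommGroup F]
  [InnerProductSpace ℝ F]

theorem le_of_inner_map_self_bounds [FiniteDimensional ℝ E] {T : E →ₗ[ℝ] E}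
    {U W : Submodule ℝ E} (hUW : finrank ℝ E < finrank ℝ U + finrank ℝ W) {a c : ℝ}
    (hU : ∀ x ∈ U, ⟪x, T x⟫ ≤ a * ‖x‖ ^ 2) (hW : ∀ x ∈ W, c * ‖x‖ ^ 2 ≤ ⟪x, T x⟫) : c ≤ a := by
  obtain ⟨x, hxU, hxW, hx⟩ := exists_mem_inf_ne_zero_of_finrank_lt hUW
  exact le_of_mul_le_mul_right ((hW x hxW).trans (hU x hxU)) (by positivity)

theorem cauchy_interlace_of_isometry {n : ℕ} (b : OrthonormalBasis (Fin (n + 1)) ℝ E)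
    (w : OrthonormalBasis (Fin n) ℝ F) {T : E →ₗ[ℝ] E} {T' : F →ₗ[ℝ] F} (J : F →ₗᵢ[ℝ] E)
    (hJ : ∀ y, ⟪J y, T (J y)⟫ = ⟪y, T' y⟫) {lam : Fin (n + 1) → ℝ} {mu : Fin n → ℝ}
    (hlam : Monotone lam) (hb : ∀ i, T (b i) = lam i • b i)
    (hmu : Monotone mu) (hw : ∀ i, T' (w i) = mu i • w i) (p : Fin n) :
    lam p.castSucc ≤ mu p ∧ mu p ≤ lam p.succ := by
  have : FiniteDimensional ℝ E := b.toBasis.finiteDimensional_of_finite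
  have hE : finrank ℝ E = n + 1 := by simpa using finrank_eq_card_basis b.toBasis
  have hJV (V : Submodule ℝ F) : finrank ℝ (V.map J.toLinearMap) = finrank ℝ V :=
    (equivMapOfInjective _ J.injective V).finrank_eq.symm
  have hJU {V : Submodule ℝ F} {a : ℝ} (hV : ∀ y ∈ V, ⟪y, T' y⟫ ≤ a * ‖y‖ ^ 2) :
      ∀ x ∈ V.map J.toLinearMap, ⟪x, T x⟫ ≤ a * ‖x‖ ^ 2 := by
    rintro _ ⟨y, hy, rfl⟩
    simpa [hJ] using hV y hy
  have hJW {V : Submodule ℝ F} {c : ℝ} (hV : ∀ y ∈ V, c * ‖y‖ ^ 2 ≤ ⟪y, T' y⟫) :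
      ∀ x ∈ V.map J.toLinearMap, c * ‖x‖ ^ 2 ≤ ⟪x, T x⟫ := by
    rintro _ ⟨y, hy, rfl⟩
    simpa [hJ] using hV y hy
  constructor
  · refine le_of_inner_map_self_bounds
      (U := (span ℝ (w '' ↑(Finset.Iic p))).map J.toLinearMap)
      (W := span ℝ (b '' ↑(Finset.Ici p.castSucc))) ?_
      (hJU fun y => w.inner_map_self_le_of_mem_span_image hw fun i hi =>
        hmu (by simpa using hi))
      (fun x => b.le_inner_map_self_of_mem_span_image hb fun i hi => hlam (by simpa using hi))
    rw [hE, hJV, w.finrank_span_image, b.finrank_span_image, Fin.card_Iic, Fin.card_Ici]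
    simp only [Fin.val_castSucc]
    omega
  · refine le_of_inner_map_self_bounds (U := span ℝ (b '' ↑(Finset.Iic p.succ)))
      (W := (span ℝ (w '' ↑(Finset.Ici p))).map J.toLinearMap) ?_
      (fun x => b.inner_map_self_le_of_mem_span_image hb fun i hi => hlam (by simpa using hi))
      (hJW fun y => w.le_inner_map_self_of_mem_span_image hw fun i hi =>
        hmu (by simpa using hi))
    rw [hE, hJV, w.finrank_span_image, b.finrank_span_image, Fin.card_Iic, Fin.card_Ici]
    simp only [Fin.val_succ]
    omega

end Interlacing

namespace Polynomial

theorem eq_of_monotone_of_prod_X_sub_C_eq {R : Type*} [CommRing R] [IsDomain R]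
    [LinearOrder R] {N : ℕ} {f g : Fin N → R} (hf : Monotone f) (hg : Monotone g)
    (h : ∏ i, (X - C (f i)) = ∏ i, (X - C (g i))) : f = g := by
  have hroots := congrArg roots h
  simp only [roots_prod _ _ (Finset.prod_ne_zero_iff.mpr fun i _ => X_sub_C_ne_zero _),
    roots_X_sub_C, Multiset.bind_singleton, Fin.univ_val_map, Multiset.coe_eq_coe] at hroots
  exact List.ofFn_injective (hroots.eq_of_sortedLE hf.sortedLE_ofFn hg.sortedLE_ofFn)

theorem im_eq_zero_of_isRoot_map_prod_X_sub_C {ι : Type*} [Fintype ι] (f : ι → ℝ)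
    {z : ℂ} (hz : ((∏ i, (X - C (f i))).map (algebraMap ℝ ℂ)).IsRoot z) : z.im = 0 := by
  simp only [Polynomial.map_prod, IsRoot, eval_prod, Finset.prod_eq_zero_iff] at hz
  obtain ⟨i, -, hi⟩ := hz
  simp [sub_eq_zero.mp (by simpa using hi)]

end Polynomial

namespace Matrix

theorem inner_toEuclideanLin_conjTranspose_mul_mul {𝕜 m n : Type*} [RCLike 𝕜] [Fintype m]
    [DecidableEq m] [Fintype n] [DecidableEq n] (M : Matrix n m 𝕜) (S : Matrix n n 𝕜)
    (x y : EuclideanSpace 𝕜 m) :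
    inner 𝕜 (M.toEuclideanLin x) (S.toEuclideanLin (M.toEuclideanLin y)) =
      inner 𝕜 x ((Mᴴ * S * M).toEuclideanLin y) := by
  rw [toLpLin_mul_same, toLpLin_mul_same, toEuclideanLin_conjTranspose_eq_adjoint]
  exact (LinearMap.adjoint_inner_right _ _ _).symm

theorem conjTranspose_one_submatrix_mul_mul {R m n : Type*} [Semiring R] [StarRing R]
    [Fintype n] [DecidableEq n] (S : Matrix n n R) (f : m → n) :
    ((1 : Matrix n n R).submatrix id f)ᴴ * S * (1 : Matrix n n R).submatrix id f =
      S.submatrix f f := by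
  ext i j
  simp [mul_apply, one_apply]

theorem IsHermitian.exists_orthonormalBasis_toEuclideanLin_eq_smul {N : ℕ}
    {S : Matrix (Fin N) (Fin N) ℝ} (hS : S.IsHermitian) {lam : Fin N → ℝ} (hlam : Monotone lam)
    (h : S.charpoly = ∏ i, (X - C (lam i))) :
    ∃ b : OrthonormalBasis (Fin N) ℝ (EuclideanSpace ℝ (Fin N)),
      ∀ i, S.toEuclideanLin (b i) = lam i • b i := by
  let σ := Tuple.sort hS.eigenvalues
  have hσ : lam = hS.eigenvalues ∘ σ := by
    refine eq_of_monotone_of_prod_X_sub_C_eq hlam (Tuple.monotone_sort _) ?_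
    rw [← h, hS.charpoly_eq]
    exact (Equiv.prod_comp σ fun i => X - C (hS.eigenvalues i)).symm
  refine ⟨hS.eigenvectorBasis.reindex σ.symm, fun i => ?_⟩
  rw [OrthonormalBasis.reindex_apply, Equiv.symm_symm, hσ, toLpLin_apply]
  simp [hS.mulVec_eigenvectorBasis]

theorem IsHermitian.cauchy_interlace {n : ℕ} {S : Matrix (Fin (n + 1)) (Fin (n + 1)) ℝ}
    (hS : S.IsHermitian) {f : Fin n → Fin (n + 1)} (hf : Function.Injective f)
    {lam : Fin (n + 1) → ℝ} (hlam : Monotone lam) (hSlam : S.charpoly = ∏ i, (X - C (lam i)))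
    {mu : Fin n → ℝ} (hmu : Monotone mu)
    (hSmu : (S.submatrix f f).charpoly = ∏ i, (X - C (mu i))) (p : Fin n) :
    lam p.castSucc ≤ mu p ∧ mu p ≤ lam p.succ := by
  obtain ⟨b, hb⟩ := hS.exists_orthonormalBasis_toEuclideanLin_eq_smul hlam hSlam
  obtain ⟨w, hw⟩ := (hS.submatrix f).exists_orthonormalBasis_toEuclideanLin_eq_smul hmu hSmu
  -- `P` extends a vector by zero off the range of `f`.
  let P : Matrix (Fin (n + 1)) (Fin n) ℝ := (1 : Matrix _ _ ℝ).submatrix id f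
  have hP (x y : EuclideanSpace ℝ (Fin n)) :
      ⟪P.toEuclideanLin x, P.toEuclideanLin y⟫ = ⟪x, y⟫ := by
    have h := P.inner_toEuclideanLin_conjTranspose_mul_mul 1 x y
    rw [conjTranspose_one_submatrix_mul_mul, submatrix_one _ hf] at h
    simpa only [toLpLin_one, LinearMap.id_apply] using h
  refine cauchy_interlace_of_isometry b w (P.toEuclideanLin.isometryOfInner hP) (fun y => ?_)
    hlam hb hmu hw p
  rw [← conjTranspose_one_submatrix_mul_mul]
  exact P.inner_toEuclideanLin_conjTranspose_mul_mul S y y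

theorem submatrix_diagonal_mul_mul_diagonal {R l m : Type*} [NonUnitalNonAssocSemiring R]
    [Fintype l] [DecidableEq l] [Fintype m] [DecidableEq m] (e e' : m → R) (M : Matrix m m R)
    (f : l → m) :
    (diagonal e * M * diagonal e').submatrix f f =
      diagonal (e ∘ f) * M.submatrix f f * diagonal (e' ∘ f) := by
  ext i j
  simp [diagonal_mul, mul_diagonal]

theorem charpoly_diagonal_mul_mul_diagonal_inv {K m : Type*} [Field K] [Fintype m]
    [DecidableEq m] {e : m → K} (he : ∀ i, e i ≠ 0) (M : Matrix m m K) :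
    (diagonal e * M * diagonal e⁻¹).charpoly = M.charpoly := by
  rw [mul_assoc, charpoly_mul_comm, mul_assoc, diagonal_mul_diagonal]
  simp [he]

theorem Symmetrizable.exists_isHermitian_charpoly_submatrix_eq {m : Type*} [Fintype m]
    [DecidableEq m] {A : Matrix m m ℝ} (hA : A.Symmetrizable) :
    ∃ S : Matrix m m ℝ, S.IsHermitian ∧
      ∀ {l : Type*} [Fintype l] [DecidableEq l] (f : l → m),
        (S.submatrix f f).charpoly = (A.submatrix f f).charpoly := by
  obtain ⟨d, hd, hdA⟩ := hA
  have he (i : m) : √(d i) ≠ 0 := (Real.sqrt_pos.2 (hd i)).ne'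
  refine ⟨diagonal (fun i => √(d i)) * A * diagonal (fun i => √(d i))⁻¹, ?_, fun f => ?_⟩
  · ext i j
    have hij : d j * A j i = d i * A i j := by
      simpa [diagonal_mul] using congr_fun₂ hdA.eq i j
    have hi := he i
    have hj := he j
    simp only [conjTranspose_apply, star_trivial, diagonal_mul, mul_diagonal, Pi.inv_apply]
    field_simp
    rw [Real.sq_sqrt (hd i).le, Real.sq_sqrt (hd j).le]
    linarith
  · rw [submatrix_diagonal_mul_mul_diagonal]
    exact charpoly_diagonal_mul_mul_diagonal_inv (fun i => he (f i)) _

end Matrix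

theorem cauchy_interlace_symmetrizable_general (n : ℕ)
    (A : Matrix (Fin (n + 1)) (Fin (n + 1)) ℝ) (hA : A.Symmetrizable)
    (k : Fin (n + 1))
    (B : Matrix (Fin n) (Fin n) ℝ)
    (hB : B = A.submatrix k.succAbove k.succAbove) :
    (∀ z : ℂ, (A.charpoly.map (algebraMap ℝ ℂ)).IsRoot z → z.im = 0) ∧
    (∀ z : ℂ, (B.charpoly.map (algebraMap ℝ ℂ)).IsRoot z → z.im = 0) ∧
    ∀ (lam : Fin (n + 1) → ℝ), Monotone lam →
      A.charpoly = ∏ i, (X - C (lam i)) →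
      ∀ (mu : Fin n → ℝ), Monotone mu →
        B.charpoly = ∏ i, (X - C (mu i)) →
        ∀ p : Fin n, lam p.castSucc ≤ mu p ∧ mu p ≤ lam p.succ := by
  obtain ⟨S, hS, hSA⟩ := hA.exists_isHermitian_charpoly_submatrix_eq
  have hA' : S.charpoly = A.charpoly := by simpa using hSA id
  have hB' : (S.submatrix k.succAbove k.succAbove).charpoly = B.charpoly := hB ▸ hSA _
  refine ⟨fun z hz => ?_, fun z hz => ?_, fun lam hlam hAlam mu hmu hBmu =>
    hS.cauchy_interlace Fin.succAbove_right_injective hlam (hA'.trans hAlam) hmu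
      (hB'.trans hBmu)⟩
  · rw [← hA', hS.charpoly_eq] at hz
    exact im_eq_zero_of_isRoot_map_prod_X_sub_C _ hz
  · rw [← hB', (hS.submatrix _).charpoly_eq] at hz
    exact im_eq_zero_of_isRoot_map_prod_X_sub_C _ hz

/-- **Cauchy interlace theorem for symmetrizable matrices.** Let `A` be a real
symmetrizable `(n+1) × (n+1)` matrix (`n + 1 ≥ 2`) and `B` the principal
submatrix obtained by deleting row `k` and column `k`. Then all eigenvalues of
`A` and of `B` are real, and whenever `lam`, `mu` list the eigenvalues of `A`
and `B` in increasing order with multiplicity, they interlace. -/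
theorem cauchy_interlace_symmetrizable (n : ℕ) (hn : 1 ≤ n)
    (A : Matrix (Fin (n + 1)) (Fin (n + 1)) ℝ) (hA : A.Symmetrizable)
    (k : Fin (n + 1))
    (B : Matrix (Fin n) (Fin n) ℝ)
    (hB : B = A.submatrix k.succAbove k.succAbove) :
    (∀ z : ℂ, (A.charpoly.map (algebraMap ℝ ℂ)).IsRoot z → z.im = 0) ∧
    (∀ z : ℂ, (B.charpoly.map (algebraMap ℝ ℂ)).IsRoot z → z.im = 0) ∧
    ∀ (lam : Fin (n + 1) → ℝ), Monotone lam →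
      A.charpoly = ∏ i, (X - C (lam i)) →
      ∀ (mu : Fin n → ℝ), Monotone mu →
        B.charpoly = ∏ i, (X - C (mu i)) →
        ∀ p : Fin n, lam p.castSucc ≤ mu p ∧ mu p ≤ lam p.succ :=
  cauchy_interlace_symmetrizable_general n A hA k B hB
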